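/- Let w, z ∈ A⁺, let z₀ be the longest prefix of z belonging to L (the first coordinate of z) and let w_m be the longest suffix of w belonging to L (the last coordinate of w). Then f̂(wz) = f̂(wz₀) · f(z₀)⁻¹ · f̂(z) and f̂(wz) = f̂(w) · f(w_m)⁻¹ · f̂(w_m z) in the group G. -/

import Mathlib

open List

variable {A : Type*} {G : Type*} {A_G : Type*}

/-- `L̈`: the words not in `L` whose maximal proper prefix and suffix are in `L`. -/
def Ddot (L : Set (List A)) : Set (List A) :=
  {v | v ∉ L ∧ v.dropLast ∈ L ∧ v.tail ∈ L}

/-- `IsSc L w s` : `s` is the sequence of coordinates of `w` determined by `L`,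
via the recursive construction of the paper: if `w ∈ L` then `s = (w)`; otherwise
select an occurrence `w = w' v w''` of a factor `v ∈ L̈` and put
`s = sc_L[w' v_α] (v) sc_L[v_ω w'']`. -/
inductive IsSc (L : Set (List A)) : List A → List (List A) → Prop
  | base (w : List A) (hw : w ∈ L) : IsSc L w [w]
  | step (w' w'' v : List A) (s₁ s₂ : List (List A)) (hv : v ∈ Ddot L)
      (h₁ : IsSc L (w' ++ v.dropLast) s₁) (h₂ : IsSc L (v.tail ++ w'') s₂) :
      IsSc L (w' ++ v ++ w'') (s₁ ++ v :: s₂)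

open Classical in
/-- `sc_L[w]`, the sequence of coordinates of `w` determined by `L`. -/
noncomputable def scL (L : Set (List A)) (w : List A) : List (List A) :=
  if h : ∃ s, IsSc L w s then h.choose else []

/-!
The coordinate sequence of a word is unique. If two derivations split `u` at occurrences
`u = w₁ v₁ x₁ = w₂ v₂ x₂` of factors of `L̈` with `w₁` shorter than `w₂`, then `v₂` is not a
factor of `v₁_ω ∈ L`, so it ends after `v₁`: `w₂ v₂_α = w₁ v₁ m` and `v₁_ω x₁ = d v₂ x₂` with
`v₁_ω m = d v₂_α`. Both derivations then refine, by induction on the length, to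
`sc[w₁ v₁_α] v₁ sc[v₁_ω m] v₂ sc[v₂_ω x₂]`.

Uniqueness makes the split of `z = z' v z''` along `v ∈ L̈` also a split of `wz`, so
`sc[wz] = sc[w z' v_α] v sc[v_ω z'']`, and induction on the derivation of `sc[z]` gives the
first identity; the second is its mirror image.
-/

def IsFactorial (L : Set (List A)) : Prop :=
  ∀ u w : List A, w ∈ L → u ≠ [] → u <:+: w → u ∈ L

section

variable {L : Set (List A)}

theorem Ddot.ne_nil {v : List A} (hv : v ∈ Ddot L) : v ≠ [] := by
  rintro rfl
  exact hv.1 hv.2.1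

theorem Ddot.not_isInfix (hFac : IsFactorial L)
    {v w : List A} (hv : v ∈ Ddot L) (hw : w ∈ L) : ¬ v <:+: w :=
  fun h => hv.1 (hFac v w hw (Ddot.ne_nil hv) h)

theorem two_le_length_of_notMem (hA : ∀ a : A, [a] ∈ L) {u : List A} (hu : u ≠ [])
    (huL : u ∉ L) : 2 ≤ u.length := by
  match u, hu, huL with
  | [a], _, huL => exact absurd (hA a) huL
  | _ :: _ :: _, _, _ => simp

theorem Ddot.two_le_length (hA : ∀ a : A, [a] ∈ L) {v : List A} (hv : v ∈ Ddot L) :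
    2 ≤ v.length :=
  two_le_length_of_notMem hA (Ddot.ne_nil hv) hv.1

theorem Ddot.dropLast_ne_nil (hA : ∀ a : A, [a] ∈ L) {v : List A} (hv : v ∈ Ddot L) :
    v.dropLast ≠ [] := by
  have := Ddot.two_le_length hA hv
  rw [← length_pos_iff, length_dropLast]
  omega

theorem Ddot.tail_ne_nil (hA : ∀ a : A, [a] ∈ L) {v : List A} (hv : v ∈ Ddot L) :
    v.tail ≠ [] := by
  have := Ddot.two_le_length hA hv
  rw [← length_pos_iff, length_tail]
  omega

theorem exists_mem_ddot_isInfix (hA : ∀ a : A, [a] ∈ L) {u : List A} (hu : u ≠ [])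
    (huL : u ∉ L) : ∃ v ∈ Ddot L, v <:+: u := by
  classical
  -- a shortest non-empty factor of `u` outside `L` lies in `L̈`
  have hex : ∃ n, ∃ v, v <:+: u ∧ v ≠ [] ∧ v ∉ L ∧ v.length = n :=
    ⟨_, u, infix_refl u, hu, huL, rfl⟩
  obtain ⟨v, hvu, hv, hvL, hlen⟩ := Nat.find_spec hex
  have hmin : ∀ x, x <:+: v → x.length < v.length → x ≠ [] → x ∈ L := fun x hx hlt hx₀ => by
    by_contra hxL
    exact Nat.find_min hex (hlen ▸ hlt) ⟨x, hx.trans hvu, hx₀, hxL, rfl⟩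
  have h2 := two_le_length_of_notMem hA hv hvL
  refine ⟨v, ⟨hvL, hmin _ (dropLast_prefix v).isInfix ?_ ?_,
    hmin _ (tail_suffix v).isInfix ?_ ?_⟩, hvu⟩ <;>
    simp only [length_dropLast, length_tail, ← length_pos_iff] <;> omega

theorem exists_isSc (hA : ∀ a : A, [a] ∈ L) {u : List A} (hu : u ≠ []) : ∃ s, IsSc L u s := by
  induction hn : u.length using Nat.strong_induction_on generalizing u with
  | _ n ih =>
  by_cases huL : u ∈ L
  · exact ⟨[u], .base u huL⟩
  obtain ⟨v, hv, w', w'', rfl⟩ := exists_mem_ddot_isInfix hA hu huL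
  have h2 := Ddot.two_le_length hA hv
  simp only [length_append] at hn
  obtain ⟨s₁, h₁⟩ := ih (w' ++ v.dropLast).length
    (by simp only [length_append, length_dropLast]; omega)
    (by simp [Ddot.dropLast_ne_nil hA hv]) rfl
  obtain ⟨s₂, h₂⟩ := ih (v.tail ++ w'').length
    (by simp only [length_append, length_tail]; omega)
    (by simp [Ddot.tail_ne_nil hA hv]) rfl
  exact ⟨_, .step w' w'' v s₁ s₂ hv h₁ h₂⟩

theorem IsSc.ne_nil {u : List A} {s : List (List A)} (h : IsSc L u s) : s ≠ [] := by
  cases h <;> simp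

theorem isSc_iff {u : List A} {s : List (List A)} :
    IsSc L u s ↔ (u ∈ L ∧ s = [u]) ∨
      ∃ w' v w'' s₁ s₂, v ∈ Ddot L ∧ IsSc L (w' ++ v.dropLast) s₁ ∧
        IsSc L (v.tail ++ w'') s₂ ∧ u = w' ++ v ++ w'' ∧ s = s₁ ++ v :: s₂ := by
  constructor
  · rintro (⟨_, hu⟩ | ⟨w', w'', v, s₁, s₂, hv, h₁, h₂⟩)
    · exact .inl ⟨hu, rfl⟩
    · exact .inr ⟨w', v, w'', s₁, s₂, hv, h₁, h₂, rfl, rfl⟩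
  · rintro (⟨hu, rfl⟩ | ⟨w', v, w'', s₁, s₂, hv, h₁, h₂, rfl, rfl⟩)
    · exact .base u hu
    · exact .step w' w'' v s₁ s₂ hv h₁ h₂

theorem Ddot.eq_of_isPrefix (hFac : IsFactorial L)
    {v v' : List A} (hv : v ∈ Ddot L) (hv' : v' ∈ Ddot L) (h : v <+: v') : v = v' := by
  by_contra hne
  have hlt : v.length < v'.length := lt_of_le_of_ne h.length_le (mt h.eq_of_length hne)
  have : v <+: v'.dropLast :=
    prefix_of_prefix_length_le h (dropLast_prefix v') (by rw [length_dropLast]; omega)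
  exact Ddot.not_isInfix hFac hv hv'.2.1 this.isInfix

theorem Ddot.eq_of_append_eq (hFac : IsFactorial L)
    {v₁ v₂ x₁ x₂ : List A} (hv₁ : v₁ ∈ Ddot L) (hv₂ : v₂ ∈ Ddot L)
    (h : v₁ ++ x₁ = v₂ ++ x₂) : v₁ = v₂ := by
  rcases prefix_or_prefix_of_prefix (prefix_append v₁ x₁) (h ▸ prefix_append v₂ x₂) with h₁₂ | h₂₁
  · exact Ddot.eq_of_isPrefix hFac hv₁ hv₂ h₁₂
  · exact (Ddot.eq_of_isPrefix hFac hv₂ hv₁ h₂₁).symm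

theorem Ddot.exists_overlap_of_length_lt
    (hFac : IsFactorial L)
    {w₁ v₁ x₁ w₂ v₂ x₂ : List A} (hv₁ : v₁ ∈ Ddot L) (hv₂ : v₂ ∈ Ddot L)
    (heq : w₁ ++ v₁ ++ x₁ = w₂ ++ v₂ ++ x₂) (hlt : w₁.length < w₂.length) :
    ∃ d m, v₁.tail ++ x₁ = d ++ v₂ ++ x₂ ∧ w₁ ++ v₁ ++ m = w₂ ++ v₂.dropLast ∧
      v₁.tail ++ m = d ++ v₂.dropLast := by
  obtain ⟨d₀, rfl⟩ : w₁ <+: w₂ :=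
    prefix_of_prefix_length_le ⟨v₁ ++ x₁, by simpa using heq⟩ ⟨v₂ ++ x₂, by simp⟩ hlt.le
  obtain ⟨b, d, rfl⟩ := exists_cons_of_ne_nil (by rintro rfl; simp at hlt : d₀ ≠ [])
  obtain ⟨a, y, rfl⟩ := exists_cons_of_ne_nil (Ddot.ne_nil hv₁)
  simp only [append_assoc, append_cancel_left_eq, cons_append, cons.injEq] at heq
  obtain ⟨rfl, hyx⟩ := heq
  have hv₂y : ¬ d ++ v₂ <+: y := fun ⟨r, hr⟩ =>
    Ddot.not_isInfix hFac hv₂ hv₁.2.2 ⟨d, r, by simpa using hr⟩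
  obtain ⟨r, hr⟩ := (prefix_or_prefix_of_prefix (prefix_append y x₁)
    ⟨x₂, by rw [hyx, append_assoc]⟩).resolve_right hv₂y
  have hr₀ : r ≠ [] := by
    rintro rfl
    exact hv₂y ⟨[], by simpa using hr.symm⟩
  have hm : y ++ r.dropLast = d ++ v₂.dropLast := by
    rw [← dropLast_append_of_ne_nil hr₀, hr, dropLast_append_of_ne_nil (Ddot.ne_nil hv₂)]
  refine ⟨d, r.dropLast, ?_, ?_, hm⟩
  · simpa using hyx
  · simp [hm]

theorem IsSc.step_eq_step_of_length_lt (hFac : IsFactorial L)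
    (hA : ∀ a : A, [a] ∈ L) {w₁ v₁ x₁ w₂ v₂ x₂ : List A} {s₁ t₁ s₂ t₂ : List (List A)}
    (IH : ∀ u s t, u.length < (w₁ ++ v₁ ++ x₁).length → IsSc L u s → IsSc L u t → s = t)
    (hv₁ : v₁ ∈ Ddot L) (hv₂ : v₂ ∈ Ddot L)
    (heq : w₁ ++ v₁ ++ x₁ = w₂ ++ v₂ ++ x₂) (hlt : w₁.length < w₂.length)
    (ha₁ : IsSc L (w₁ ++ v₁.dropLast) s₁) (hb₁ : IsSc L (v₁.tail ++ x₁) t₁)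
    (ha₂ : IsSc L (w₂ ++ v₂.dropLast) s₂) (hb₂ : IsSc L (v₂.tail ++ x₂) t₂) :
    s₁ ++ v₁ :: t₁ = s₂ ++ v₂ :: t₂ := by
  obtain ⟨d, m, hx, hw, hm⟩ := Ddot.exists_overlap_of_length_lt hFac hv₁ hv₂ heq hlt
  obtain ⟨c, hc⟩ := exists_isSc hA (u := v₁.tail ++ m) (by simp [hm, Ddot.dropLast_ne_nil hA hv₂])
  have := Ddot.ne_nil hv₁
  have := Ddot.ne_nil hv₂
  have ht₁ : t₁ = c ++ v₂ :: t₂ :=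
    IH _ _ _ (by simp [← length_pos_iff] at *; omega) hb₁
      (hx ▸ .step d x₂ v₂ c t₂ hv₂ (hm ▸ hc) hb₂)
  have hs₂ : s₂ = s₁ ++ v₁ :: c :=
    IH _ _ _ (by rw [heq]; simp [← length_pos_iff] at *; omega) ha₂
      (hw ▸ .step w₁ m v₁ s₁ c hv₁ ha₁ hc)
  simp [ht₁, hs₂]

theorem IsSc.unique (hFac : IsFactorial L)
    (hA : ∀ a : A, [a] ∈ L) {u : List A} {s t : List (List A)}
    (hs : IsSc L u s) (ht : IsSc L u t) : s = t := by
  induction hn : u.length using Nat.strong_induction_on generalizing u s t with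
  | _ n ih =>
  have IH : ∀ u s t, u.length < n → IsSc L u s → IsSc L u t → s = t :=
    fun _ _ _ h hs ht => ih _ h hs ht rfl
  rcases isSc_iff.1 hs with ⟨huL, rfl⟩ | ⟨w₁, v₁, x₁, s₁, t₁, hv₁, ha₁, hb₁, rfl, rfl⟩ <;>
    rcases isSc_iff.1 ht with ⟨huL', rfl⟩ | ⟨w₂, v₂, x₂, s₂, t₂, hv₂, ha₂, hb₂, heq, rfl⟩
  · rfl
  · exact absurd ⟨w₂, x₂, heq.symm⟩ (Ddot.not_isInfix hFac hv₂ huL)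
  · exact absurd ⟨w₁, x₁, rfl⟩ (Ddot.not_isInfix hFac hv₁ huL')
  subst hn
  rcases lt_trichotomy w₁.length w₂.length with hlt | hlen | hgt
  · exact step_eq_step_of_length_lt hFac hA IH hv₁ hv₂ heq hlt ha₁ hb₁ ha₂ hb₂
  · obtain ⟨rfl, hvx⟩ := append_inj (by simpa using heq) hlen
    obtain rfl := Ddot.eq_of_append_eq hFac hv₁ hv₂ hvx
    obtain rfl := append_cancel_left hvx
    have := Ddot.ne_nil hv₁
    rw [IH _ _ _ (by simp [← length_pos_iff] at *; omega) ha₁ ha₂,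
      IH _ _ _ (by simp [← length_pos_iff] at *; omega) hb₁ hb₂]
  · exact (step_eq_step_of_length_lt hFac hA (heq ▸ IH) hv₂ hv₁ heq.symm hgt
      ha₂ hb₂ ha₁ hb₁).symm

variable [Group G] (f : List A → G)

theorem IsSc.prod_map_append_left (hFac : IsFactorial L)
    (hA : ∀ a : A, [a] ∈ L) {z : List A} {sz : List (List A)} (hz : IsSc L z sz)
    {w : List A} {swz swz₀ : List (List A)}
    (hwz : IsSc L (w ++ z) swz) (hwz₀ : IsSc L (w ++ sz.headI) swz₀) :
    (swz.map f).prod = (swz₀.map f).prod * (f sz.headI)⁻¹ * (sz.map f).prod := by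
  induction hz generalizing w swz swz₀ with
  | base z _ =>
    obtain rfl := hwz.unique hFac hA hwz₀
    simp
  | step z' z'' v s₁ s₂ hv h₁ h₂ ih₁ _ =>
    obtain ⟨a, s₁, rfl⟩ := exists_cons_of_ne_nil h₁.ne_nil
    obtain ⟨t₁, ht₁⟩ := exists_isSc hA (u := w ++ (z' ++ v.dropLast))
      (by simp [Ddot.dropLast_ne_nil hA hv])
    obtain rfl : swz = t₁ ++ v :: s₂ := hwz.unique hFac hA
      (by simpa using IsSc.step (w ++ z') z'' v t₁ s₂ hv (by simpa using ht₁) h₂)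
    simp only [cons_append, headI_cons] at hwz₀ ⊢
    simp only [map_append, map_cons, prod_append, prod_cons, ih₁ ht₁ hwz₀, headI_cons]
    group

theorem IsSc.prod_map_append_right (hFac : IsFactorial L)
    (hA : ∀ a : A, [a] ∈ L) {w : List A} {sw : List (List A)} (hw : IsSc L w sw)
    {z : List A} {swz swmz : List (List A)}
    (hwz : IsSc L (w ++ z) swz) (hwmz : IsSc L (sw.getLastD [] ++ z) swmz) :
    (swz.map f).prod = (sw.map f).prod * (f (sw.getLastD []))⁻¹ * (swmz.map f).prod := by
  induction hw generalizing z swz swmz with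
  | base w _ =>
    obtain rfl := hwz.unique hFac hA hwmz
    simp
  | step w' w'' v s₁ s₂ hv h₁ h₂ _ ih₂ =>
    obtain ⟨s₂, b, rfl⟩ := (eq_nil_or_concat' s₂).resolve_left h₂.ne_nil
    obtain ⟨t₂, ht₂⟩ := exists_isSc hA (u := v.tail ++ w'' ++ z)
      (by simp [Ddot.tail_ne_nil hA hv])
    obtain rfl : swz = s₁ ++ v :: t₂ := hwz.unique hFac hA
      (by simpa using IsSc.step w' (w'' ++ z) v s₁ t₂ hv h₁ (by simpa using ht₂))
    rw [← cons_append, ← append_assoc, getLastD_concat] at hwmz ⊢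
    rw [getLastD_concat] at ih₂
    simp only [map_append, map_cons, prod_append, prod_cons, ih₂ ht₂ hwmz]
    group

end

/-- `f̂(u)` is `(s.map f).prod` for the coordinate sequence `s` of `u`. -/
theorem fhat_superposition_general [Group G] (L : Set (List A))
    (hFac : ∀ u w : List A, w ∈ L → u ≠ [] → u <:+: w → u ∈ L)
    (hA : ∀ a : A, [a] ∈ L)
    (f : List A → G)
    (w z : List A)
    (sw sz swz swz0 swmz : List (List A))
    (hsw : IsSc L w sw) (hsz : IsSc L z sz)
    (hswz : IsSc L (w ++ z) swz)
    (hswz0 : IsSc L (w ++ sz.headI) swz0)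
    (hswmz : IsSc L (sw.getLastD [] ++ z) swmz) :
    (swz.map f).prod = (swz0.map f).prod * (f sz.headI)⁻¹ * (sz.map f).prod ∧
    (swz.map f).prod =
      (sw.map f).prod * (f (sw.getLastD []))⁻¹ * (swmz.map f).prod :=
  ⟨hsz.prod_map_append_left f hFac hA hswz hswz0,
    hsw.prod_map_append_right f hFac hA hswz hswmz⟩

/-- Lemma 1(1). Let `w, z ∈ A⁺`, let `z₀` be the first
coordinate of `z` (its longest prefix in `L`) and `w_m` the last coordinate of
`w` (its longest suffix in `L`).  Then
`f̂(wz) = f̂(wz₀)·f(z₀)⁻¹·f̂(z)` and `f̂(wz) = f̂(w)·f(w_m)⁻¹·f̂(w_m z)` in `G`,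
where for a word `u` with coordinate sequence `s`, `f̂(u)` is the product of the
`f`-values of all the coordinates of `u`. -/
theorem fhat_superposition [Nonempty A] [Group G] (L : Set (List A))
    (hE : [] ∉ L)
    (hFac : ∀ u w : List A, w ∈ L → u ≠ [] → u <:+: w → u ∈ L)
    (hA : ∀ a : A, [a] ∈ L)
    (f : List A → G)
    (w z : List A) (hw : w ≠ []) (hz : z ≠ [])
    (sw sz swz swz0 swmz : List (List A))
    (hsw : IsSc L w sw) (hsz : IsSc L z sz)
    (hswz : IsSc L (w ++ z) swz)
    (hswz0 : IsSc L (w ++ sz.headI) swz0)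
    (hswmz : IsSc L (sw.getLastD [] ++ z) swmz) :
    (swz.map f).prod = (swz0.map f).prod * (f sz.headI)⁻¹ * (sz.map f).prod ∧
    (swz.map f).prod =
      (sw.map f).prod * (f (sw.getLastD []))⁻¹ * (swmz.map f).prod :=
  fhat_superposition_general L hFac hA f w z sw sz swz swz0 swmz hsw hsz hswz hswz0 hswmz
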